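/- (Quantum curve for monotone Hurwitz numbers.) Let K = ℚ((ħ)) be the field of formal Laurent series in ħ over ℚ. For each integer d ≥ 0 define c_d = Σ_{m ≥ 0} (f(d,m)/d!)·ħ^{m−d} ∈ K (a well-defined Laurent series supported in degrees ≥ −d; note c_0 = 1), and let Z = Σ_{d ≥ 0} c_d·x^d ∈ K[[x]]. Then x·ħ²·Z″ − ħ·Z′ + Z = 0 in K[[x]], where ′ denotes the formal derivative with respect to x, multiplication by x shifts coefficients, and ħ acts by scalar multiplication in K. (This is the equation [x̂ŷ² + ŷ + 1]Z = 0 with x̂ = x and ŷ = −ħ ∂/∂x.) -/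

import Mathlib

open scoped BigOperators

/-- A tuple `τ` of permutations is a monotone factorisation (tuple) if each `τ i` is a
transposition `(aᵢ bᵢ)` with `aᵢ < bᵢ` and `b₁ ≤ b₂ ≤ ⋯ ≤ bₘ`. -/
def IsMonotoneFactorisation {d m : ℕ} (τ : Fin m → Equiv.Perm (Fin d)) : Prop :=
  ∃ a b : Fin m → Fin d,
    (∀ i, a i < b i) ∧ (∀ i, τ i = Equiv.swap (a i) (b i)) ∧ Monotone b

/-- `f(d, m)`: the number of monotone `m`-tuples of transpositions in `S_d`. -/
noncomputable def numMonotone (d m : ℕ) : ℕ :=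
  Nat.card {τ : Fin m → Equiv.Perm (Fin d) // IsMonotoneFactorisation τ}

/-- The formal variable `ħ` of `K = ℚ((ħ))`, the field of formal Laurent series over `ℚ`. -/
noncomputable def hbar : LaurentSeries ℚ := HahnSeries.single (1 : ℤ) (1 : ℚ)

/-- `c_d = Σ_{m ≥ 0} (f(d,m)/d!) ħ^{m-d} ∈ ℚ((ħ))`, written as `ħ^{-d}` times the image of
the power series `Σ_{m ≥ 0} (f(d,m)/d!) ħ^m`. -/
noncomputable def waveCoeff (d : ℕ) : LaurentSeries ℚ :=
  HahnSeries.single (-(d : ℤ)) (1 : ℚ) *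
    HahnSeries.ofPowerSeries ℤ ℚ
      (PowerSeries.mk fun m => (numMonotone d m : ℚ) / (Nat.factorial d : ℚ))

/-- The wave function `Z = Σ_{d ≥ 0} c_d x^d ∈ K[[x]]`. -/
noncomputable def waveZ : PowerSeries (LaurentSeries ℚ) :=
  PowerSeries.mk fun d => waveCoeff d

/-!
Sorting monotone tuples in `S_{d+1}` by their last transposition `(aₘ bₘ)` gives
`f(d+1, m+1) = f(d, m+1) + d f(d+1, m)`: either every `bᵢ < d` and the tuple lives in `S_d`,
or `bₘ = d`, `aₘ` is any of `d` values and the first `m` transpositions form an arbitrary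
monotone tuple in `S_{d+1}`. For the Laurent series `c_d` this says
`c_d = (d+1) ħ (1 - d ħ) c_{d+1}`, which is precisely the vanishing of the coefficient of `x^d`
in `x ħ² Z″ − ħ Z′ + Z`.
-/

lemma Equiv.eq_and_eq_of_swap_eq_swap {α : Type*} [LinearOrder α] {a b c d : α} (hab : a < b)
    (hcd : c < d) (h : Equiv.swap a b = Equiv.swap c d) : a = c ∧ b = d := by
  have hpair : ({a, b} : Set α) = {c, d} := by
    ext x
    simpa [Equiv.swap_apply_ne_self_iff, hab.ne, hcd.ne] using congrArg (fun σ => σ x ≠ x) h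
  rcases Set.pair_eq_pair_iff.1 hpair with h' | ⟨rfl, rfl⟩
  · exact h'
  · exact absurd (hab.trans hcd) (lt_irrefl a)

lemma Fin.monotone_snoc_iff {α : Type*} [Preorder α] {m : ℕ} {f : Fin m → α} {x : α} :
    Monotone (Fin.snoc f x : Fin (m + 1) → α) ↔ Monotone f ∧ ∀ i, f i ≤ x := by
  refine ⟨fun h => ⟨fun i j hij => ?_, fun i => ?_⟩, fun ⟨hf, hx⟩ i j hij => ?_⟩
  · simpa using h (Fin.castSucc_le_castSucc_iff.2 hij)
  · simpa using h (Fin.castSucc_lt_last i).le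
  · induction j using Fin.lastCases with
    | last =>
      induction i using Fin.lastCases with
      | last => exact le_rfl
      | cast i => simpa using hx i
    | cast j =>
      induction i using Fin.lastCases with
      | last => exact absurd hij (Fin.castSucc_lt_last j).not_ge
      | cast i => simpa using hf (Fin.castSucc_le_castSucc_iff.1 hij)

/-- Read in `ℕ` rather than `Fin d`, so that chains for `d` are also chains for `d + 1`. -/
def monotoneChains (d m : ℕ) : Set (Fin m → ℕ × ℕ) :=
  {p | (∀ i, (p i).1 < (p i).2 ∧ (p i).2 < d) ∧ Monotone fun i => (p i).2}

def finMonotoneChains (d m : ℕ) : Set (Fin m → Fin d × Fin d) :=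
  {p | (∀ i, (p i).1 < (p i).2) ∧ Monotone fun i => (p i).2}

lemma setOf_isMonotoneFactorisation_eq_image (d m : ℕ) :
    {τ : Fin m → Equiv.Perm (Fin d) | IsMonotoneFactorisation τ} =
      (fun p i => Equiv.swap (p i).1 (p i).2) '' finMonotoneChains d m := by
  ext τ
  constructor
  · rintro ⟨a, b, hab, hτ, hb⟩
    exact ⟨fun i => (a i, b i), ⟨hab, hb⟩, (funext hτ).symm⟩
  · rintro ⟨p, ⟨hp, hmono⟩, rfl⟩
    exact ⟨_, _, hp, fun i => rfl, hmono⟩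

lemma monotoneChains_eq_image (d m : ℕ) :
    monotoneChains d m = (fun p i => ((p i).1.val, (p i).2.val)) '' finMonotoneChains d m := by
  ext p
  constructor
  · rintro ⟨hp, hmono⟩
    refine ⟨fun i => (⟨(p i).1, (hp i).1.trans (hp i).2⟩, ⟨(p i).2, (hp i).2⟩),
      ⟨fun i => (hp i).1, fun i j hij => hmono hij⟩, rfl⟩
  · rintro ⟨p, ⟨hp, hmono⟩, rfl⟩
    exact ⟨fun i => ⟨hp i, (p i).2.2⟩, fun i j hij => hmono hij⟩

lemma monotoneChains_finite (d m : ℕ) : (monotoneChains d m).Finite := by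
  rw [monotoneChains_eq_image]
  exact (Set.toFinite _).image _

lemma numMonotone_eq_ncard (d m : ℕ) : numMonotone d m = (monotoneChains d m).ncard := by
  change {τ : Fin m → Equiv.Perm (Fin d) | IsMonotoneFactorisation τ}.ncard = _
  rw [setOf_isMonotoneFactorisation_eq_image, monotoneChains_eq_image, Set.InjOn.ncard_image,
    Set.InjOn.ncard_image]
  · intro p _ q _ h
    simp only [funext_iff, Prod.mk.injEq, Fin.val_inj] at h
    exact funext fun i => Prod.ext (h i).1 (h i).2
  · intro p hp q hq h
    exact funext fun i => Prod.ext_iff.2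
      (Equiv.eq_and_eq_of_swap_eq_swap (hp.1 i) (hq.1 i) (congrFun h i))

lemma monotoneChains_mono {d d' : ℕ} (h : d ≤ d') (m : ℕ) :
    monotoneChains d m ⊆ monotoneChains d' m :=
  fun _ ⟨hp, hmono⟩ => ⟨fun i => ⟨(hp i).1, (hp i).2.trans_le h⟩, hmono⟩

lemma snoc_mem_monotoneChains_iff {d m : ℕ} {p : Fin m → ℕ × ℕ} {x : ℕ × ℕ} :
    (Fin.snoc p x : Fin (m + 1) → ℕ × ℕ) ∈ monotoneChains d (m + 1) ↔
      p ∈ monotoneChains d m ∧ x.1 < x.2 ∧ x.2 < d ∧ ∀ i, (p i).2 ≤ x.2 := by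
  have hsnd : (fun i => (Fin.snoc (α := fun _ => ℕ × ℕ) p x i).2) =
      Fin.snoc (fun i => (p i).2) x.2 :=
    Fin.comp_snoc Prod.snd p x
  simp only [monotoneChains, Set.mem_ofPred_eq, Fin.forall_fin_succ', Fin.snoc_castSucc,
    Fin.snoc_last, hsnd, Fin.monotone_snoc_iff]
  tauto

lemma monotoneChains_zero_right (d : ℕ) : monotoneChains d 0 = Set.univ :=
  Set.eq_univ_of_forall fun _ => ⟨finZeroElim, fun i => i.elim0⟩

lemma monotoneChains_succ_succ (d m : ℕ) :
    monotoneChains (d + 1) (m + 1) = monotoneChains d (m + 1) ∪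
      (fun x : ℕ × (Fin m → ℕ × ℕ) => Fin.snoc x.2 (x.1, d)) ''
        (Set.Iio d ×ˢ monotoneChains (d + 1) m) := by
  ext p
  obtain ⟨q, x, rfl⟩ : ∃ q x, p = Fin.snoc q x :=
    ⟨Fin.init p, p (Fin.last m), (Fin.snoc_init_self p).symm⟩
  simp only [Set.mem_union, Set.mem_image, Set.mem_prod, Set.mem_Iio, Prod.exists, Fin.snoc_inj,
    snoc_mem_monotoneChains_iff]
  constructor
  · rintro ⟨hq, hx, hxd, hle⟩
    rcases Nat.lt_succ_iff_lt_or_eq.1 hxd with hxd | hxd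
    · exact Or.inl ⟨⟨fun i => ⟨(hq.1 i).1, (hle i).trans_lt hxd⟩, hq.2⟩, hx, hxd, hle⟩
    · exact Or.inr ⟨x.1, q, ⟨hxd ▸ hx, hq⟩, rfl, Prod.ext rfl hxd.symm⟩
  · rintro (⟨hq, hx, hxd, hle⟩ | ⟨a, q, ⟨ha, hq⟩, rfl, rfl⟩)
    · exact ⟨monotoneChains_mono d.le_succ m hq, hx, hxd.trans d.lt_succ_self, hle⟩
    · exact ⟨hq, ha, d.lt_succ_self, fun i => Nat.lt_succ_iff.1 (hq.1 i).2⟩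

lemma ncard_monotoneChains_succ_succ (d m : ℕ) :
    (monotoneChains (d + 1) (m + 1)).ncard =
      (monotoneChains d (m + 1)).ncard + d * (monotoneChains (d + 1) m).ncard := by
  have hfin : (Set.Iio d ×ˢ monotoneChains (d + 1) m).Finite :=
    (Set.finite_Iio d).prod (monotoneChains_finite _ _)
  rw [monotoneChains_succ_succ, Set.ncard_union_eq ?_ (monotoneChains_finite _ _) (hfin.image _),
    Set.InjOn.ncard_image ?_, Set.ncard_prod, Set.ncard_Iio_nat]
  · rintro ⟨a, q⟩ - ⟨a', q'⟩ - h
    obtain ⟨rfl, h⟩ := Fin.snoc_inj.1 h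
    simpa using (Prod.mk.inj h).1
  · refine Set.disjoint_left.2 ?_
    rintro _ hp ⟨⟨a, q⟩, -, rfl⟩
    simpa using (hp.1 (Fin.last m)).2

lemma numMonotone_zero_right (d : ℕ) : numMonotone d 0 = 1 := by
  rw [numMonotone_eq_ncard, monotoneChains_zero_right, Set.ncard_univ, Nat.card_unique]

lemma numMonotone_succ_succ (d m : ℕ) :
    numMonotone (d + 1) (m + 1) = numMonotone d (m + 1) + d * numMonotone (d + 1) m := by
  simp only [numMonotone_eq_ncard, ncard_monotoneChains_succ_succ]

section

open PowerSeries

lemma coeff_X_mul_derivative {R : Type*} [CommSemiring R] (f : R⟦X⟧) (n : ℕ) :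
    coeff n (X * d⁄dX R f) = n * coeff n f := by
  cases n with
  | zero => simp
  | succ n => rw [coeff_succ_X_mul, coeff_derivative, mul_comm, Nat.cast_succ]

noncomputable def monotoneSeries (d : ℕ) : ℚ⟦X⟧ :=
  mk fun m => (numMonotone d m : ℚ) / d.factorial

lemma monotoneSeries_eq_mul_monotoneSeries_succ (d : ℕ) :
    monotoneSeries d = C ((d : ℚ) + 1) * (1 - C (d : ℚ) * X) * monotoneSeries (d + 1) := by
  have hfac : ((d + 1).factorial : ℚ) = (d + 1) * d.factorial := by
    push_cast [Nat.factorial_succ]; ring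
  ext m
  rw [mul_assoc, coeff_C_mul, sub_mul, one_mul, mul_assoc, map_sub, coeff_C_mul]
  cases m with
  | zero =>
    simp only [monotoneSeries, coeff_mk, coeff_zero_X_mul, numMonotone_zero_right, hfac,
      Nat.cast_one, mul_zero, sub_zero]
    field_simp
  | succ m =>
    simp only [monotoneSeries, coeff_mk, coeff_succ_X_mul, numMonotone_succ_succ, hfac]
    push_cast
    field_simp
    ring

lemma waveCoeff_eq (d : ℕ) :
    waveCoeff d =
      HahnSeries.single (-(d : ℤ)) 1 * HahnSeries.ofPowerSeries ℤ ℚ (monotoneSeries d) :=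
  rfl

lemma waveCoeff_eq_mul_waveCoeff_succ (d : ℕ) :
    waveCoeff d = (d + 1) * hbar * (1 - d * hbar) * waveCoeff (d + 1) := by
  have hsingle : HahnSeries.single (-(d : ℤ)) (1 : ℚ) =
      hbar * HahnSeries.single (-((d + 1 : ℕ) : ℤ)) 1 := by
    rw [hbar, HahnSeries.single_mul_single, one_mul]
    congr 2
    push_cast
    ring
  rw [waveCoeff_eq, waveCoeff_eq, monotoneSeries_eq_mul_monotoneSeries_succ, hsingle]
  have hX : HahnSeries.ofPowerSeries ℤ ℚ X = hbar := HahnSeries.ofPowerSeries_X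
  simp only [map_mul, map_sub, map_add, map_one, map_natCast, hX]
  ring

end

open PowerSeries in
/-- Quantum curve for monotone Hurwitz numbers: `x ħ² Z″ − ħ Z′ + Z = 0` in `K[[x]]`,
i.e. `[x̂ŷ² + ŷ + 1] Z = 0` with `x̂ = x`, `ŷ = −ħ ∂/∂x`. -/
theorem waveZ_quantum_curve :
    X * C (hbar ^ 2) *
        (PowerSeries.derivative (LaurentSeries ℚ)
          (PowerSeries.derivative (LaurentSeries ℚ) waveZ)) -
      C hbar * PowerSeries.derivative (LaurentSeries ℚ) waveZ + waveZ = 0 := by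
  have hZ (k : ℕ) : coeff k waveZ = waveCoeff k := coeff_mk _ _
  ext n : 1
  rw [mul_comm X, mul_assoc]
  simp only [map_add, map_sub, map_zero, coeff_C_mul, coeff_X_mul_derivative, coeff_derivative, hZ]
  rw [waveCoeff_eq_mul_waveCoeff_succ n]
  ring
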